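/- arXiv:1010.1681 — 3 statements merged into one kernel-verified Lean document; each statement's English description precedes it below -/
import Mathlib

section
/- Let a : ℝ → ℝ be a smooth function and let t : ℝ × ℝ → ℝ be a smooth solution of the generalized Tricomi equation, i.e. ∂²t/∂x²(x,y) + a(x)·∂²t/∂y²(x,y) = 0 for all (x,y) ∈ ℝ². Fix real numbers a₀ and b, and define f : ℝ × ℝ → ℝ by f(x,y) = ∫_{b}^{y} t(x,r) dr − ∫_{a₀}^{x} ( ∫_{a₀}^{q} a(s)·∂t/∂y(s,b) ds ) dq. Then f is also a solution of the generalized Tricomi equation: ∂²f/∂x²(x,y) + a(x)·∂²f/∂y²(x,y) = 0 for all (x,y) ∈ ℝ². -/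
open MeasureTheory intervalIntegral Metric

noncomputable def pX (h : ℝ × ℝ → ℝ) : ℝ × ℝ → ℝ := fun p => fderiv ℝ h p (1, 0)
noncomputable def pY (h : ℝ × ℝ → ℝ) : ℝ × ℝ → ℝ := fun p => fderiv ℝ h p (0, 1)

lemma pX_contDiff {h : ℝ × ℝ → ℝ} (hh : ContDiff ℝ (⊤ : ℕ∞) h) : ContDiff ℝ (⊤ : ℕ∞) (pX h) :=
  (hh.fderiv_right (by simp)).clm_apply contDiff_const

lemma pY_contDiff {h : ℝ × ℝ → ℝ} (hh : ContDiff ℝ (⊤ : ℕ∞) h) : ContDiff ℝ (⊤ : ℕ∞) (pY h) :=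
  (hh.fderiv_right (by simp)).clm_apply contDiff_const

lemma hasDerivAt_pX {h : ℝ × ℝ → ℝ} (hh : ContDiff ℝ (⊤ : ℕ∞) h) (x r : ℝ) :
    HasDerivAt (fun x' => h (x', r)) (pX h (x, r)) x := by
  have H : HasFDerivAt h (fderiv ℝ h (x, r)) (x, r) :=
    (hh.differentiable (by simp) (x, r)).hasFDerivAt
  have hc : HasDerivAt (fun x' : ℝ => ((x', r) : ℝ × ℝ)) ((1 : ℝ), (0 : ℝ)) x :=
    HasDerivAt.prodMk (hasDerivAt_id x) (hasDerivAt_const x r)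
  exact H.comp_hasDerivAt x hc

lemma hasDerivAt_pY {h : ℝ × ℝ → ℝ} (hh : ContDiff ℝ (⊤ : ℕ∞) h) (x y : ℝ) :
    HasDerivAt (fun y' => h (x, y')) (pY h (x, y)) y := by
  have H : HasFDerivAt h (fderiv ℝ h (x, y)) (x, y) :=
    (hh.differentiable (by simp) (x, y)).hasFDerivAt
  have hc : HasDerivAt (fun y' : ℝ => ((x, y') : ℝ × ℝ)) ((0 : ℝ), (1 : ℝ)) y :=
    HasDerivAt.prodMk (hasDerivAt_const y x) (hasDerivAt_id y)
  exact H.comp_hasDerivAt y hc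

lemma param_hasDerivAt {h : ℝ × ℝ → ℝ} (hh : ContDiff ℝ (⊤ : ℕ∞) h) (b y x : ℝ) :
    HasDerivAt (fun x' => ∫ r in b..y, h (x', r)) (∫ r in b..y, pX h (x, r)) x := by
  obtain ⟨M, hM⟩ : ∃ M, ∀ p ∈ (Set.Icc (x - 1) (x + 1) ×ˢ Set.uIcc b y), ‖pX h p‖ ≤ M :=
    (isCompact_Icc.prod isCompact_uIcc).exists_bound_of_continuousOn
      ((pX_contDiff hh).continuous.continuousOn)
  have hcont : ∀ x' : ℝ, Continuous fun r => h (x', r) := fun x' =>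
    hh.continuous.comp (continuous_const.prodMk continuous_id)
  have hcont' : Continuous fun r => pX h (x, r) :=
    (pX_contDiff hh).continuous.comp (continuous_const.prodMk continuous_id)
  exact (intervalIntegral.hasDerivAt_integral_of_dominated_loc_of_deriv_le
    (F := fun x' r => h (x', r)) (F' := fun x' r => pX h (x', r)) (bound := fun _ => M)
    (ball_mem_nhds x one_pos)
    (Filter.Eventually.of_forall fun x' => ((hcont x').aestronglyMeasurable).restrict)
    ((hcont x).intervalIntegrable _ _)
    (hcont'.aestronglyMeasurable).restrict
    (Filter.Eventually.of_forall fun r hr => fun x' hx' => by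
      apply hM
      refine ⟨?_, Set.uIoc_subset_uIcc hr⟩
      rw [Real.ball_eq_Ioo] at hx'
      exact Set.Ioo_subset_Icc_self hx')
    (intervalIntegrable_const)
    (Filter.Eventually.of_forall fun r hr => fun x' hx' => hasDerivAt_pX hh x' r)).2

/-- If `t` is a smooth solution of the generalized Tricomi equation
`∂²t/∂x² + a(x)·∂²t/∂y² = 0`, then
`f(x,y) = ∫_b^y t(x,r) dr − ∫_{a₀}^x (∫_{a₀}^q a(s)·∂t/∂y(s,b) ds) dq`
is also a solution of the generalized Tricomi equation. -/
theorem stmt_0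
    (a : ℝ → ℝ) (ha : ContDiff ℝ (⊤ : ℕ∞) a)
    (t : ℝ × ℝ → ℝ) (ht : ContDiff ℝ (⊤ : ℕ∞) t)
    (hsol : ∀ x y : ℝ,
      deriv (fun x' => deriv (fun x'' => t (x'', y)) x') x
        + a x * deriv (fun y' => deriv (fun y'' => t (x, y'')) y') y = 0)
    (a₀ b : ℝ)
    (f : ℝ × ℝ → ℝ)
    (hf : ∀ x y : ℝ, f (x, y) =
      (∫ r in b..y, t (x, r))
        - ∫ q in a₀..x, ∫ s in a₀..q, a s * deriv (fun y' => t (s, y')) b) :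
    ∀ x y : ℝ,
      deriv (fun x' => deriv (fun x'' => f (x'', y)) x') x
        + a x * deriv (fun y' => deriv (fun y'' => f (x, y'')) y') y = 0 := by
  intro x y
  -- rewrite hsol in terms of pX, pY
  have hsol' : ∀ x r : ℝ, pX (pX t) (x, r) + a x * pY (pY t) (x, r) = 0 := by
    intro x r
    have e1 : (fun x' => deriv (fun x'' => t (x'', r)) x') = fun x' => pX t (x', r) :=
      funext fun x' => (hasDerivAt_pX ht x' r).deriv
    have e2 : (fun y' => deriv (fun y'' => t (x, y'')) y') = fun y' => pY t (x, y') :=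
      funext fun y' => (hasDerivAt_pY ht x y').deriv
    have := hsol x r
    rw [e1, e2, (hasDerivAt_pX (pX_contDiff ht) x r).deriv,
      (hasDerivAt_pY (pY_contDiff ht) x r).deriv] at this
    exact this
  -- continuity facts
  have hcontt : ∀ x' : ℝ, Continuous fun r => t (x', r) := fun x' =>
    ht.continuous.comp (continuous_const.prodMk continuous_id)
  have hub : Continuous fun s => a s * deriv (fun y' => t (s, y')) b := by
    simp only [show ∀ s : ℝ, deriv (fun y' => t (s, y')) b = pY t (s, b) from
      fun s => (hasDerivAt_pY ht s b).deriv]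
    exact ha.continuous.mul
      ((pY_contDiff ht).continuous.comp (continuous_id.prodMk continuous_const))
  -- the y-part
  have hY : ∀ y' : ℝ, deriv (fun y'' => f (x, y'')) y' = t (x, y') := by
    intro y'
    have : (fun y'' => f (x, y'')) = fun y'' =>
        (∫ r in b..y'', t (x, r)) -
          ∫ q in a₀..x, ∫ s in a₀..q, a s * deriv (fun y'' => t (s, y'')) b :=
      funext fun y'' => hf x y''
    rw [this]
    have hder : HasDerivAt (fun y'' => ∫ r in b..y'', t (x, r)) (t (x, y')) y' :=
      intervalIntegral.integral_hasDerivAt_right ((hcontt x).intervalIntegrable _ _)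
        ((hcontt x).stronglyMeasurableAtFilter _ _) (hcontt x).continuousAt
    exact (hder.sub_const _).deriv
  have hY2 : deriv (fun y' => deriv (fun y'' => f (x, y'')) y') y = pY t (x, y) := by
    have : (fun y' => deriv (fun y'' => f (x, y'')) y') = fun y' => t (x, y') :=
      funext hY
    rw [this]
    exact (hasDerivAt_pY ht x y).deriv
  -- the x-part
  have hX : ∀ x' : ℝ, deriv (fun x'' => f (x'', y)) x' =
      (∫ r in b..y, pX t (x', r)) - ∫ s in a₀..x', a s * deriv (fun y' => t (s, y')) b := by
    intro x'
    have hrw : (fun x'' => f (x'', y)) = fun x'' =>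
        (∫ r in b..y, t (x'', r)) -
          ∫ q in a₀..x'', ∫ s in a₀..q, a s * deriv (fun y' => t (s, y')) b :=
      funext fun x'' => hf x'' y
    rw [hrw]
    have hgi : Continuous fun q => ∫ s in a₀..q, a s * deriv (fun y' => t (s, y')) b :=
      intervalIntegral.continuous_primitive (fun _ _ => hub.intervalIntegrable _ _) a₀
    have h2 : HasDerivAt (fun x'' => ∫ q in a₀..x'',
        ∫ s in a₀..q, a s * deriv (fun y' => t (s, y')) b)
        (∫ s in a₀..x', a s * deriv (fun y' => t (s, y')) b) x' :=
      intervalIntegral.integral_hasDerivAt_right (hgi.intervalIntegrable _ _)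
        (hgi.stronglyMeasurableAtFilter _ _) hgi.continuousAt
    exact ((param_hasDerivAt ht b y x').sub h2).deriv
  have hX2 : deriv (fun x' => deriv (fun x'' => f (x'', y)) x') x =
      (∫ r in b..y, pX (pX t) (x, r)) - a x * pY t (x, b) := by
    have : (fun x' => deriv (fun x'' => f (x'', y)) x') = fun x' =>
        (∫ r in b..y, pX t (x', r)) -
          ∫ s in a₀..x', a s * deriv (fun y' => t (s, y')) b :=
      funext hX
    rw [this]
    have h1 : HasDerivAt (fun x' => ∫ r in b..y, pX t (x', r))
        (∫ r in b..y, pX (pX t) (x, r)) x := param_hasDerivAt (pX_contDiff ht) b y x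
    have h2 : HasDerivAt (fun x' => ∫ s in a₀..x', a s * deriv (fun y' => t (s, y')) b)
        (a x * deriv (fun y' => t (x, y')) b) x :=
      intervalIntegral.integral_hasDerivAt_right (hub.intervalIntegrable _ _)
        (hub.stronglyMeasurableAtFilter _ _) hub.continuousAt
    rw [(show HasDerivAt (fun x' => (∫ r in b..y, pX t (x', r)) -
        ∫ s in a₀..x', a s * deriv (fun y' => t (s, y')) b) _ x from h1.sub h2).deriv, (hasDerivAt_pY ht x b).deriv]
  -- compute the integral of pX (pX t)
  have hint : (∫ r in b..y, pX (pX t) (x, r)) = -(a x * (pY t (x, y) - pY t (x, b))) := by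
    have e : (fun r => pX (pX t) (x, r)) = fun r => -(a x * pY (pY t) (x, r)) := by
      funext r
      have := hsol' x r
      linarith
    rw [e]
    have hcont2 : Continuous fun r => pY (pY t) (x, r) :=
      (pY_contDiff (pY_contDiff ht)).continuous.comp (continuous_const.prodMk continuous_id)
    rw [intervalIntegral.integral_neg, intervalIntegral.integral_const_mul]
    have hftc : (∫ r in b..y, pY (pY t) (x, r)) = pY t (x, y) - pY t (x, b) :=
      intervalIntegral.integral_eq_sub_of_hasDerivAt
        (fun r _ => hasDerivAt_pY (pY_contDiff ht) x r)
        (hcont2.intervalIntegrable _ _)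
    rw [hftc]
  rw [hX2, hY2, hint]
  ring
end

section
/- Let a : ℝ → ℝ be a smooth function and let t : ℝ × ℝ → ℝ be a smooth solution of the generalized Tricomi equation ∂²t/∂x² + a(x)·∂²t/∂y² = 0 on ℝ². Fix real numbers a₀ and b, and define f(x,y) = ∫_{b}^{y} t(x,r) dr − ∫_{a₀}^{x} ( ∫_{a₀}^{q} a(s)·∂t/∂y(s,b) ds ) dq. Then for all (x,y) ∈ ℝ², the second x-derivative of f satisfies ∂²f/∂x²(x,y) = −a(x)·∂t/∂y(x,y). -/
open intervalIntegral Metric Set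

/-- Partial derivative in the first coordinate, as applied `fderiv`. -/
private lemma hasDerivAt_fst {t : ℝ × ℝ → ℝ} (ht : Differentiable ℝ t) (x r : ℝ) :
    HasDerivAt (fun x' => t (x', r)) (fderiv ℝ t (x, r) (1, 0)) x := by
  have h1 : HasDerivAt (fun x' : ℝ => (x', r)) ((1 : ℝ), (0 : ℝ)) x :=
    (hasDerivAt_id x).prodMk (hasDerivAt_const x r)
  exact ((ht (x, r)).hasFDerivAt.comp_hasDerivAt x h1)

private lemma hasDerivAt_snd {t : ℝ × ℝ → ℝ} (ht : Differentiable ℝ t) (x r : ℝ) :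
    HasDerivAt (fun r' => t (x, r')) (fderiv ℝ t (x, r) (0, 1)) r := by
  have h1 : HasDerivAt (fun r' : ℝ => (x, r')) ((0 : ℝ), (1 : ℝ)) r :=
    (hasDerivAt_const r x).prodMk (hasDerivAt_id r)
  exact ((ht (x, r)).hasFDerivAt.comp_hasDerivAt r h1)

private lemma contDiff_pd {t : ℝ × ℝ → ℝ} (ht : ContDiff ℝ (⊤ : ℕ∞) t) (v : ℝ × ℝ) :
    ContDiff ℝ (⊤ : ℕ∞) (fun p => fderiv ℝ t p v) :=
  (ht.fderiv_right (by simp)).clm_apply contDiff_const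

/-- Differentiation under the interval integral sign for a smooth integrand. -/
private lemma hasDerivAt_param_integral {t : ℝ × ℝ → ℝ} (ht : ContDiff ℝ (⊤ : ℕ∞) t)
    (b y x : ℝ) :
    HasDerivAt (fun x' => ∫ r in b..y, t (x', r))
      (∫ r in b..y, fderiv ℝ t (x, r) (1, 0)) x := by
  set t1 : ℝ × ℝ → ℝ := fun p => fderiv ℝ t p (1, 0) with ht1
  have ht1c : Continuous t1 := (contDiff_pd ht (1, 0)).continuous
  -- bound on compact set
  obtain ⟨C, hC⟩ : ∃ C, ∀ p ∈ (Icc (x - 1) (x + 1)) ×ˢ uIcc b y, ‖t1 p‖ ≤ C :=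
    ((isCompact_Icc.prod isCompact_uIcc)).exists_bound_of_continuousOn ht1c.continuousOn
  have key := intervalIntegral.hasDerivAt_integral_of_dominated_loc_of_deriv_le (F := fun x' r => t (x', r))
    (F' := fun x' r => t1 (x', r)) (bound := fun _ => C) (μ := MeasureTheory.volume)
    (a := b) (b := y) (x₀ := x) (s := ball x 1) (ball_mem_nhds x one_pos)
    (Filter.Eventually.of_forall fun x' =>
      (ht.continuous.comp (Continuous.prodMk_right x')).aestronglyMeasurable)
    ((ht.continuous.comp (Continuous.prodMk_right x)).intervalIntegrable b y)
    ((ht1c.comp (Continuous.prodMk_right x)).aestronglyMeasurable)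
    (Filter.Eventually.of_forall fun r hr x' hx' => by
      refine hC (x', r) ⟨?_, uIoc_subset_uIcc hr⟩
      have := abs_le.1 (le_of_lt (by simpa [Real.dist_eq] using mem_ball.1 hx'))
      constructor <;> linarith [this.1, this.2])
    (intervalIntegrable_const)
    (Filter.Eventually.of_forall fun r _ x' _ =>
      hasDerivAt_fst (ht.differentiable (by simp)) x' r)
  exact key.2

/-- With `t` a smooth solution of the generalized Tricomi equation and
`f(x,y) = ∫_b^y t(x,r) dr − ∫_{a₀}^x (∫_{a₀}^q a(s)·∂t/∂y(s,b) ds) dq`,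
the second `x`-derivative of `f` satisfies `∂²f/∂x²(x,y) = −a(x)·∂t/∂y(x,y)`. -/
theorem stmt_1
    (a : ℝ → ℝ) (ha : ContDiff ℝ (⊤ : ℕ∞) a)
    (t : ℝ × ℝ → ℝ) (ht : ContDiff ℝ (⊤ : ℕ∞) t)
    (hsol : ∀ x y : ℝ,
      deriv (fun x' => deriv (fun x'' => t (x'', y)) x') x
        + a x * deriv (fun y' => deriv (fun y'' => t (x, y'')) y') y = 0)
    (a₀ b : ℝ)
    (f : ℝ × ℝ → ℝ)
    (hf : ∀ x y : ℝ, f (x, y) =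
      (∫ r in b..y, t (x, r))
        - ∫ q in a₀..x, ∫ s in a₀..q, a s * deriv (fun y' => t (s, y')) b) :
    ∀ x y : ℝ,
      deriv (fun x' => deriv (fun x'' => f (x'', y)) x') x
        = - a x * deriv (fun y' => t (x, y')) y := by
  intro x y
  set t1 : ℝ × ℝ → ℝ := fun p => fderiv ℝ t p (1, 0) with ht1def
  set t2 : ℝ × ℝ → ℝ := fun p => fderiv ℝ t p (0, 1) with ht2def
  have ht1 : ContDiff ℝ (⊤ : ℕ∞) t1 := contDiff_pd ht (1, 0)
  have ht2 : ContDiff ℝ (⊤ : ℕ∞) t2 := contDiff_pd ht (0, 1)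
  have hdt : Differentiable ℝ t := (ht.differentiable (by simp))
  -- the inner integrand g
  set g : ℝ → ℝ := fun s => a s * deriv (fun y' => t (s, y')) b with hg
  have hgeq : g = fun s => a s * t2 (s, b) := by
    funext s
    simp only [hg]
    rw [(hasDerivAt_snd hdt s b).deriv]
  have hgc : Continuous g := by
    rw [hgeq]
    exact ha.continuous.mul (ht2.continuous.comp (continuous_id.prodMk continuous_const))
  -- G q = ∫_{a₀}^q g
  set G : ℝ → ℝ := fun q => ∫ s in a₀..q, g s with hG
  -- first derivative of f in x, at any point x'
  have hd1 : ∀ x', HasDerivAt (fun x'' => f (x'', y))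
      ((∫ r in b..y, t1 (x', r)) - G x') x' := by
    intro x'
    have h1 : HasDerivAt (fun x'' => ∫ r in b..y, t (x'', r))
        (∫ r in b..y, t1 (x', r)) x' := hasDerivAt_param_integral ht b y x'
    have h2 : HasDerivAt (fun x'' => ∫ q in a₀..x'', G q) (G x') x' := by
      have hGc : Continuous G :=
        intervalIntegral.continuous_primitive (fun a b => hgc.intervalIntegrable a b) a₀
      exact (intervalIntegral.integral_hasDerivAt_right
        (hGc.intervalIntegrable a₀ x') (hGc.stronglyMeasurableAtFilter _ _) hGc.continuousAt)
    have := h1.sub h2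
    apply this.congr_of_eventuallyEq
    filter_upwards with x'' using (hf x'' y)
  have hderiv1 : (fun x' => deriv (fun x'' => f (x'', y)) x')
      = fun x' => (∫ r in b..y, t1 (x', r)) - G x' := by
    funext x'
    exact (hd1 x').deriv
  rw [hderiv1]
  -- second derivative
  have h1 : HasDerivAt (fun x' => ∫ r in b..y, t1 (x', r))
      (∫ r in b..y, fderiv ℝ t1 (x, r) (1, 0)) x := hasDerivAt_param_integral ht1 b y x
  have h2 : HasDerivAt G (g x) x :=
    intervalIntegral.integral_hasDerivAt_right
      (hgc.intervalIntegrable a₀ x) (hgc.stronglyMeasurableAtFilter _ _) hgc.continuousAt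
  have hD : deriv (fun x' => (∫ r in b..y, t1 (x', r)) - G x') x = _ := (h1.sub h2).deriv
  rw [hD]
  -- identify fderiv ℝ t1 (x,r) (1,0) with second x-derivative from hsol
  have hxx : ∀ r, fderiv ℝ t1 (x, r) (1, 0)
      = - (a x * deriv (fun y' => t2 (x, y')) r) := by
    intro r
    have e1 : deriv (fun x' => deriv (fun x'' => t (x'', r)) x') x
        = fderiv ℝ t1 (x, r) (1, 0) := by
      have : (fun x' => deriv (fun x'' => t (x'', r)) x') = fun x' => t1 (x', r) := by
        funext x'
        exact (hasDerivAt_fst hdt x' r).deriv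
      rw [this]
      exact (hasDerivAt_fst (ht1.differentiable (by simp)) x r).deriv
    have e2 : deriv (fun y' => deriv (fun y'' => t (x, y'')) y') r
        = deriv (fun y' => t2 (x, y')) r := by
      congr 1
      funext y'
      exact (hasDerivAt_snd hdt x y').deriv
    have := hsol x r
    rw [e1, e2] at this
    linarith
  have hint : (∫ r in b..y, fderiv ℝ t1 (x, r) (1, 0))
      = - (a x * (t2 (x, y) - t2 (x, b))) := by
    have : (∫ r in b..y, fderiv ℝ t1 (x, r) (1, 0))
        = ∫ r in b..y, (- a x) * deriv (fun y' => t2 (x, y')) r := by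
      congr 1
      funext r
      rw [hxx r]; ring
    rw [this, intervalIntegral.integral_const_mul]
    have hfund : (∫ r in b..y, deriv (fun y' => t2 (x, y')) r) = t2 (x, y) - t2 (x, b) := by
      apply intervalIntegral.integral_deriv_eq_sub
      · intro r _
        exact (hasDerivAt_snd (ht2.differentiable (by simp)) x r).differentiableAt
      · have hc : Continuous (fun r => deriv (fun y' => t2 (x, y')) r) := by
          have : (fun r => deriv (fun y' => t2 (x, y')) r)
              = fun r => fderiv ℝ t2 (x, r) (0, 1) := by
            funext r
            exact (hasDerivAt_snd (ht2.differentiable (by simp)) x r).deriv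
          rw [this]
          exact (contDiff_pd ht2 (0, 1)).continuous.comp
            (continuous_const.prodMk continuous_id)
        exact hc.intervalIntegrable b y
    rw [hfund]; ring
  rw [hint]
  have hfin : deriv (fun y' => t (x, y')) y = t2 (x, y) := (hasDerivAt_snd hdt x y).deriv
  have hgx : g x = a x * t2 (x, b) := by rw [hgeq]
  rw [hfin, hgx]
  ring
end

section
/- Let a : ℝ → ℝ be a smooth function, let g : ℝ → ℝ, and let t : ℝ × ℝ → ℝ be a smooth solution of the generalized Tricomi equation ∂²t/∂x² + a(x)·∂²t/∂y² = 0 on ℝ² satisfying the boundary condition t(x,0) = g(x) for all x ∈ ℝ. Fix a real number a₀ and define f(x,y) = ∫_{0}^{y} t(x,r) dr − ∫_{a₀}^{x} ( ∫_{a₀}^{q} a(s)·∂t/∂y(s,0) ds ) dq. Then f solves the Cauchy–Neumann problem: ∂²f/∂x²(x,y) + a(x)·∂²f/∂y²(x,y) = 0 for all (x,y) ∈ ℝ², and ∂f/∂y(x,0) = g(x) for all x ∈ ℝ. -/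
open MeasureTheory intervalIntegral Set

lemma primitive_hasDerivAt' {h : ℝ → ℝ} (hh : Continuous h) (c x : ℝ) :
    HasDerivAt (fun u => ∫ s in c..u, h s) (h x) x :=
  intervalIntegral.integral_hasDerivAt_right (hh.intervalIntegrable _ _)
    (hh.stronglyMeasurableAtFilter _ _) hh.continuousAt

lemma param_hasDerivAt' {F F' : ℝ × ℝ → ℝ} (hF : Continuous F) (hF' : Continuous F')
    (hd : ∀ x r : ℝ, HasDerivAt (fun x' => F (x', r)) (F' (x, r)) x) (c d x₀ : ℝ) :
    HasDerivAt (fun x => ∫ r in c..d, F (x, r)) (∫ r in c..d, F' (x₀, r)) x₀ := by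
  obtain ⟨C, hC⟩ := (isCompact_Icc (a := x₀ - 1) (b := x₀ + 1)).prod
    (isCompact_uIcc (a := c) (b := d)) |>.exists_bound_of_continuousOn hF'.continuousOn
  have := intervalIntegral.hasDerivAt_integral_of_dominated_loc_of_deriv_le
    (F := fun x r => F (x, r)) (F' := fun x r => F' (x, r)) (x₀ := x₀)
    (a := c) (b := d) (μ := volume) (bound := fun _ => C) (s := Metric.ball x₀ 1) (Metric.ball_mem_nhds x₀ one_pos)
    (Filter.Eventually.of_forall fun x =>
      (hF.comp (continuous_const.prodMk continuous_id)).aestronglyMeasurable)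
    ((hF.comp (continuous_const.prodMk continuous_id)).intervalIntegrable _ _)
    (hF'.comp (continuous_const.prodMk continuous_id)).aestronglyMeasurable
    (ae_of_all _ fun r hr x hx => by
      refine hC (x, r) ⟨?_, uIoc_subset_uIcc hr⟩
      have : |x - x₀| < 1 := by simpa [Metric.mem_ball, Real.dist_eq] using hx
      constructor <;> [linarith [abs_lt.1 this |>.1]; linarith [abs_lt.1 this |>.2]])
    (intervalIntegrable_const)
    (ae_of_all _ fun r hr x hx => hd x r)
  exact this.2

/-- If `t` is a smooth solution of the generalized Tricomi equation with
`t(x,0) = g(x)`, then `f(x,y) = ∫_0^y t(x,r) dr − ∫_{a₀}^x (∫_{a₀}^q a(s)·∂t/∂y(s,0) ds) dq`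
solves the Cauchy–Neumann problem: the generalized Tricomi equation with
`∂f/∂y(x,0) = g(x)` for all `x`. -/
theorem stmt_6
    (a : ℝ → ℝ) (ha : ContDiff ℝ (⊤ : ℕ∞) a)
    (g : ℝ → ℝ)
    (t : ℝ × ℝ → ℝ) (ht : ContDiff ℝ (⊤ : ℕ∞) t)
    (hsol : ∀ x y : ℝ,
      deriv (fun x' => deriv (fun x'' => t (x'', y)) x') x
        + a x * deriv (fun y' => deriv (fun y'' => t (x, y'')) y') y = 0)
    (hbc : ∀ x : ℝ, t (x, 0) = g x)
    (a₀ : ℝ)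
    (f : ℝ × ℝ → ℝ)
    (hf : ∀ x y : ℝ, f (x, y) =
      (∫ r in (0:ℝ)..y, t (x, r))
        - ∫ q in a₀..x, ∫ s in a₀..q, a s * deriv (fun y' => t (s, y')) 0) :
    (∀ x y : ℝ,
      deriv (fun x' => deriv (fun x'' => f (x'', y)) x') x
        + a x * deriv (fun y' => deriv (fun y'' => f (x, y'')) y') y = 0)
    ∧ (∀ x : ℝ, deriv (fun y' => f (x, y')) 0 = g x) := by
  -- partial derivatives of t
  set t1 : ℝ × ℝ → ℝ := fun p => fderiv ℝ t p (1, 0) with ht1def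
  set t2 : ℝ × ℝ → ℝ := fun p => fderiv ℝ t p (0, 1) with ht2def
  have ht1 : ContDiff ℝ (⊤ : ℕ∞) t1 := (ht.fderiv_right (by simp)).clm_apply contDiff_const
  have ht2 : ContDiff ℝ (⊤ : ℕ∞) t2 := (ht.fderiv_right (by simp)).clm_apply contDiff_const
  set t11 : ℝ × ℝ → ℝ := fun p => fderiv ℝ t1 p (1, 0) with ht11def
  set t22 : ℝ × ℝ → ℝ := fun p => fderiv ℝ t2 p (0, 1) with ht22def
  have ht11 : ContDiff ℝ (⊤ : ℕ∞) t11 := (ht1.fderiv_right (by simp)).clm_apply contDiff_const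
  have ht22 : ContDiff ℝ (⊤ : ℕ∞) t22 := (ht2.fderiv_right (by simp)).clm_apply contDiff_const
  -- basic HasDerivAt facts
  have hd1 : ∀ x y : ℝ, HasDerivAt (fun x' => t (x', y)) (t1 (x, y)) x := fun x y =>
    ((ht.differentiable (by simp) (x, y)).hasFDerivAt).comp_hasDerivAt x
      ((hasDerivAt_id x).prodMk (hasDerivAt_const x y))
  have hd2 : ∀ x y : ℝ, HasDerivAt (fun y' => t (x, y')) (t2 (x, y)) y := fun x y =>
    ((ht.differentiable (by simp) (x, y)).hasFDerivAt).comp_hasDerivAt y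
      ((hasDerivAt_const y x).prodMk (hasDerivAt_id y))
  have hd11 : ∀ x y : ℝ, HasDerivAt (fun x' => t1 (x', y)) (t11 (x, y)) x := fun x y => by
    have := ((ht1.differentiable (by simp) (x, y)).hasFDerivAt).comp_hasDerivAt x
      ((hasDerivAt_id x).prodMk (hasDerivAt_const x y))
    exact this
  have hd22 : ∀ x y : ℝ, HasDerivAt (fun y' => t2 (x, y')) (t22 (x, y)) y := fun x y => by
    have := ((ht2.differentiable (by simp) (x, y)).hasFDerivAt).comp_hasDerivAt y
      ((hasDerivAt_const y x).prodMk (hasDerivAt_id y))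
    exact this
  -- the PDE in terms of t11, t22
  have hPDE : ∀ x y : ℝ, t11 (x, y) + a x * t22 (x, y) = 0 := by
    intro x y
    have h1 : (fun x' => deriv (fun x'' => t (x'', y)) x') = fun x' => t1 (x', y) :=
      funext fun x' => (hd1 x' y).deriv
    have h2 : (fun y' => deriv (fun y'' => t (x, y'')) y') = fun y' => t2 (x, y') :=
      funext fun y' => (hd2 x y').deriv
    have := hsol x y
    rw [h1, h2, (hd11 x y).deriv, (hd22 x y).deriv] at this
    exact this
  -- y-derivative of f
  have hfy : ∀ x y : ℝ, HasDerivAt (fun y' => f (x, y')) (t (x, y)) y := by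
    intro x y
    have heq : (fun y' => f (x, y')) = fun y' => (∫ r in (0:ℝ)..y', t (x, r))
        - ∫ q in a₀..x, ∫ s in a₀..q, a s * deriv (fun y' => t (s, y')) 0 :=
      funext fun y' => hf x y'
    rw [heq]
    exact (primitive_hasDerivAt'
      (ht.continuous.comp (continuous_const.prodMk continuous_id)) 0 y).sub_const _
  constructor
  · intro x y
    -- rewrite for the y-part
    have hyy : deriv (fun y' => deriv (fun y'' => f (x, y'')) y') y = t2 (x, y) := by
      have h : (fun y' => deriv (fun y'' => f (x, y'')) y') = fun y' => t (x, y') :=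
        funext fun y' => (hfy x y').deriv
      rw [h, (hd2 x y).deriv]
    -- inner integral G
    set G : ℝ → ℝ := fun q => ∫ s in a₀..q, a s * t2 (s, 0) with hGdef
    have hGic : Continuous fun s => a s * t2 (s, 0) :=
      ha.continuous.mul (ht2.continuous.comp (continuous_id.prodMk continuous_const))
    have hG' : ∀ q, HasDerivAt G (a q * t2 (q, 0)) q := fun q =>
      primitive_hasDerivAt' hGic a₀ q
    have hGcont : Continuous G := by
      rw [continuous_iff_continuousAt]; exact fun q => (hG' q).continuousAt
    -- f rewritten with G
    have hfEq : ∀ x' : ℝ, f (x', y) =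
        (∫ r in (0:ℝ)..y, t (x', r)) - ∫ q in a₀..x', G q := by
      intro x'
      rw [hf x' y]
      congr 1
      apply intervalIntegral.integral_congr
      intro q _
      apply intervalIntegral.integral_congr
      intro s _
      show a s * deriv (fun y' => t (s, y')) 0 = a s * t2 (s, 0)
      rw [(hd2 s 0).deriv]
    -- first derivative in x
    have hfx : ∀ x' : ℝ, HasDerivAt (fun x'' => f (x'', y))
        ((∫ r in (0:ℝ)..y, t1 (x', r)) - G x') x' := by
      intro x'
      have heq : (fun x'' => f (x'', y)) =
          fun x'' => (∫ r in (0:ℝ)..y, t (x'', r)) - ∫ q in a₀..x'', G q :=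
        funext fun x'' => hfEq x''
      rw [heq]
      exact (param_hasDerivAt' ht.continuous ht1.continuous (fun x r => hd1 x r) 0 y x').sub
        (primitive_hasDerivAt' hGcont a₀ x')
    have hderiv1 : (fun x' => deriv (fun x'' => f (x'', y)) x') =
        fun x' => (∫ r in (0:ℝ)..y, t1 (x', r)) - G x' :=
      funext fun x' => (hfx x').deriv
    -- second derivative in x
    have hfxx : HasDerivAt (fun x' => (∫ r in (0:ℝ)..y, t1 (x', r)) - G x')
        ((∫ r in (0:ℝ)..y, t11 (x, r)) - a x * t2 (x, 0)) x :=
      (param_hasDerivAt' ht1.continuous ht11.continuous (fun x r => hd11 x r) 0 y x).sub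
        (hG' x)
    have hint11 : (∫ r in (0:ℝ)..y, t11 (x, r)) = -(a x * (t2 (x, y) - t2 (x, 0))) := by
      have h1 : (∫ r in (0:ℝ)..y, t11 (x, r)) = ∫ r in (0:ℝ)..y, -(a x * t22 (x, r)) := by
        apply intervalIntegral.integral_congr
        intro r _
        show t11 (x, r) = -(a x * t22 (x, r))
        have := hPDE x r
        linarith
      have h2 : (∫ r in (0:ℝ)..y, t22 (x, r)) = t2 (x, y) - t2 (x, 0) :=
        intervalIntegral.integral_eq_sub_of_hasDerivAt (fun r _ => hd22 x r)
          ((ht22.continuous.comp (continuous_const.prodMk continuous_id)).intervalIntegrable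
            _ _)
      rw [h1, intervalIntegral.integral_neg, intervalIntegral.integral_const_mul, h2]
    rw [hderiv1, hfxx.deriv, hyy, hint11]
    ring
  · intro x
    rw [(hfy x 0).deriv, hbc x]
end
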